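/- For every compactum X and every capacity ν on X, the function κX(ν) defined on closed sets by κX(ν)(F) = 1 − ν(X ∖ F) (the value of ν on the open complement taken via the sup-extension) is again a capacity; the resulting map κX: MX → MX is a homeomorphism and an involution; and ν is a necessity capacity if and only if κX(ν) is a possibility capacity. -/

import Mathlib

open Set TopologicalSpace

universe u v

/-- A (upper-semicontinuous) capacity on a topological space `X`:
a normalized monotone set function on the closed subsets, upper semicontinuous
in the sense of Zarichnyi–Nykyforchyn. -/
structure Capacity (X : Type u) [TopologicalSpace X] : Type u where
  toFun : Closeds X → ℝ
  empty' : toFun ⊥ = 0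
  univ' : toFun ⊤ = 1
  mono' : ∀ F G : Closeds X, F ≤ G → toFun F ≤ toFun G
  usc' : ∀ (F : Closeds X) (a : ℝ), toFun F < a →
    ∃ O : Set X, IsOpen O ∧ (F : Set X) ⊆ O ∧ ∀ B : Closeds X, (B : Set X) ⊆ O → toFun B < a

namespace Capacity

variable {X : Type u} [TopologicalSpace X]

/-- Value of a capacity on (the closure of) an arbitrary set; on closed sets this is
the value of the capacity. -/
def cval (ν : Capacity X) (A : Set X) : ℝ := ν.toFun ⟨closure A, isClosed_closure⟩

/-- The sup-extension of a capacity to open sets: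
`ν(U) = sup {ν K : K closed, K ⊆ U}`. -/
noncomputable def oval (ν : Capacity X) (U : Set X) : ℝ :=
  sSup {r : ℝ | ∃ K : Closeds X, (K : Set X) ⊆ U ∧ ν.toFun K = r}

end Capacity

/-- The topology on the space `MX` of capacities, generated by the subbase
`O₋(F,a) = {c : c(F) < a}` (`F` closed) and `O₊(U,a) = {c : c(U) > a}` (`U` open). -/
instance capacityTopology (X : Type u) [TopologicalSpace X] : TopologicalSpace (Capacity X) :=
  TopologicalSpace.generateFrom
    ({S | ∃ (F : Closeds X) (a : ℝ), a ∈ Icc (0:ℝ) 1 ∧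
        S = {c : Capacity X | c.toFun F < a}} ∪
     {S | ∃ U : Set X, IsOpen U ∧ ∃ a ∈ Icc (0:ℝ) 1,
        S = {c : Capacity X | a < c.oval U}})

/-- A possibility capacity: `ν(A ∪ B) = max (ν A) (ν B)` on closed sets. -/
def IsPossibility {X : Type u} [TopologicalSpace X] (ν : Capacity X) : Prop :=
  ∀ A B : Closeds X, ν.toFun (A ⊔ B) = max (ν.toFun A) (ν.toFun B)

/-- A necessity capacity: `ν(A ∩ B) = min (ν A) (ν B)` on closed sets. -/
def IsNecessity {X : Type u} [TopologicalSpace X] (ν : Capacity X) : Prop :=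
  ∀ A B : Closeds X, ν.toFun (A ⊓ B) = min (ν.toFun A) (ν.toFun B)

/-- A triangular norm on `[0,1]`. -/
structure Tnorm : Type where
  toFun : ℝ → ℝ → ℝ
  mem' : ∀ s ∈ Icc (0:ℝ) 1, ∀ t ∈ Icc (0:ℝ) 1, toFun s t ∈ Icc (0:ℝ) 1
  comm' : ∀ s ∈ Icc (0:ℝ) 1, ∀ t ∈ Icc (0:ℝ) 1, toFun s t = toFun t s
  assoc' : ∀ s ∈ Icc (0:ℝ) 1, ∀ t ∈ Icc (0:ℝ) 1, ∀ r ∈ Icc (0:ℝ) 1,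
    toFun (toFun s t) r = toFun s (toFun t r)
  mono' : ∀ s₁ ∈ Icc (0:ℝ) 1, ∀ s₂ ∈ Icc (0:ℝ) 1, ∀ t₁ ∈ Icc (0:ℝ) 1, ∀ t₂ ∈ Icc (0:ℝ) 1,
    s₁ ≤ s₂ → t₁ ≤ t₂ → toFun s₁ t₁ ≤ toFun s₂ t₂
  one' : ∀ s ∈ Icc (0:ℝ) 1, toFun s 1 = s

/-- Continuity of a t-norm (on the unit square). -/
def Tnorm.Cont (star : Tnorm) : Prop :=
  ContinuousOn (fun q : ℝ × ℝ => star.toFun q.1 q.2) (Icc 0 1 ×ˢ Icc 0 1)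

/-- The t-normed (fuzzy) integral `∫^{∨∗} f dν = sup { ν(f⁻¹[t,1]) ∗ t : t ∈ [0,1] }`. -/
noncomputable def tInt {X : Type u} [TopologicalSpace X] (star : Tnorm) (ν : Capacity X) (f : X → ℝ) : ℝ :=
  sSup {r : ℝ | ∃ t ∈ Icc (0:ℝ) 1, r = star.toFun (ν.cval (f ⁻¹' Icc t 1)) t}
/-!
Upper semicontinuity of `κν` at `F` comes from a closed `K ⊆ Fᶜ` almost realising `ν(Fᶜ)`: the
open set `Kᶜ` works. Conversely, upper semicontinuity of `ν` gives `κν(Fᶜ) = 1 - ν(F)` on open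
complements, so `κ` is an involution. `κ` pulls each kind of subbasic set back to a union of
subbasic sets of the other kind; for `{c(U) > a}` this uses normality of `X` to squeeze a closed
set between a closed `K ⊆ U` and `U`. Finally `κ` exchanges `∩` and `∪` by de Morgan: a necessity
capacity stays min-preserving on open sets, and in a normal space a possibility capacity stays
max-preserving on open sets, since a closed set inside `U ∪ V` splits into closed pieces inside
`U` and inside `V`.
-/

namespace Capacity

variable {X : Type u} [TopologicalSpace X]

protected lemma ext : ∀ {ν μ : Capacity X}, ν.toFun = μ.toFun → ν = μ
  | ⟨_, _, _, _, _⟩, ⟨_, _, _, _, _⟩, rfl => rfl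

lemma toFun_le_one (ν : Capacity X) (F : Closeds X) : ν.toFun F ≤ 1 :=
  ν.univ' ▸ ν.mono' F ⊤ le_top

lemma cval_of_isClosed (ν : Capacity X) {F : Set X} (hF : IsClosed F) :
    ν.cval F = ν.toFun ⟨F, hF⟩ := by
  simp only [cval, hF.closure_eq]

private lemma ovalSet_nonempty (ν : Capacity X) (U : Set X) :
    {r : ℝ | ∃ K : Closeds X, (K : Set X) ⊆ U ∧ ν.toFun K = r}.Nonempty :=
  ⟨ν.toFun ⊥, ⊥, by simp, rfl⟩

private lemma ovalSet_bddAbove (ν : Capacity X) (U : Set X) :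
    BddAbove {r : ℝ | ∃ K : Closeds X, (K : Set X) ⊆ U ∧ ν.toFun K = r} :=
  ⟨1, by rintro r ⟨K, -, rfl⟩; exact ν.toFun_le_one K⟩

lemma le_oval (ν : Capacity X) {K : Closeds X} {U : Set X} (h : (K : Set X) ⊆ U) :
    ν.toFun K ≤ ν.oval U :=
  le_csSup (ν.ovalSet_bddAbove U) ⟨K, h, rfl⟩

lemma oval_le {ν : Capacity X} {U : Set X} {b : ℝ}
    (h : ∀ K : Closeds X, (K : Set X) ⊆ U → ν.toFun K ≤ b) : ν.oval U ≤ b :=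
  csSup_le (ν.ovalSet_nonempty U) (by rintro r ⟨K, hK, rfl⟩; exact h K hK)

lemma exists_lt_oval {ν : Capacity X} {U : Set X} {a : ℝ} (h : a < ν.oval U) :
    ∃ K : Closeds X, (K : Set X) ⊆ U ∧ a < ν.toFun K := by
  obtain ⟨r, ⟨K, hK, rfl⟩, hr⟩ := exists_lt_of_lt_csSup (ν.ovalSet_nonempty U) h
  exact ⟨K, hK, hr⟩

lemma oval_mono (ν : Capacity X) {U V : Set X} (h : U ⊆ V) : ν.oval U ≤ ν.oval V :=
  oval_le fun _ hK => ν.le_oval (hK.trans h)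

lemma oval_le_toFun (ν : Capacity X) {U : Set X} {F : Closeds X} (h : U ⊆ F) :
    ν.oval U ≤ ν.toFun F :=
  oval_le fun K hK => ν.mono' K F (hK.trans h)

lemma oval_empty (ν : Capacity X) : ν.oval ∅ = 0 := by
  refine le_antisymm (ν.empty' ▸ ν.oval_le_toFun (empty_subset _)) ?_
  exact ν.empty' ▸ ν.le_oval (empty_subset _)

lemma oval_univ (ν : Capacity X) : ν.oval univ = 1 :=
  le_antisymm (oval_le fun K _ => ν.toFun_le_one K) (ν.univ' ▸ ν.le_oval (subset_univ _))

lemma exists_isOpen_oval_le (ν : Capacity X) {F : Closeds X} {a : ℝ} (h : ν.toFun F < a) :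
    ∃ O : Set X, IsOpen O ∧ (F : Set X) ⊆ O ∧ ν.oval O ≤ a := by
  obtain ⟨O, hO, hFO, hlt⟩ := ν.usc' F a h
  exact ⟨O, hO, hFO, oval_le fun B hB => (hlt B hB).le⟩

noncomputable def dual (ν : Capacity X) : Capacity X where
  toFun F := 1 - ν.oval (F : Set X)ᶜ
  empty' := by simp [oval_univ]
  univ' := by simp [oval_empty]
  mono' F G h := sub_le_sub_left (ν.oval_mono (compl_subset_compl.mpr h)) 1
  usc' F a ha := by
    obtain ⟨K, hKF, hK⟩ := exists_lt_oval (show 1 - a < ν.oval (F : Set X)ᶜ by linarith)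
    refine ⟨(K : Set X)ᶜ, K.isClosed.isOpen_compl, subset_compl_comm.mp hKF, fun B hB => ?_⟩
    have := ν.le_oval (subset_compl_comm.mp hB)
    linarith

@[simp] lemma dual_toFun (ν : Capacity X) (F : Closeds X) :
    (dual ν).toFun F = 1 - ν.oval (F : Set X)ᶜ := rfl

lemma dual_oval_compl (ν : Capacity X) (F : Closeds X) :
    (dual ν).oval (F : Set X)ᶜ = 1 - ν.toFun F := by
  refine le_antisymm (oval_le fun K hK => ?_) (le_of_forall_lt_imp_le_of_dense fun c hc => ?_)
  · have := ν.le_oval (subset_compl_comm.mp hK)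
    rw [dual_toFun]
    linarith
  · obtain ⟨O, hO, hFO, hOc⟩ := ν.exists_isOpen_oval_le (show ν.toFun F < 1 - c by linarith)
    calc c ≤ (dual ν).toFun ⟨Oᶜ, hO.isClosed_compl⟩ := by
          simp only [dual_toFun, Closeds.coe_mk, compl_compl]; linarith
      _ ≤ (dual ν).oval (F : Set X)ᶜ := (dual ν).le_oval (compl_subset_compl.mpr hFO)

lemma dual_dual (ν : Capacity X) : dual (dual ν) = ν :=
  Capacity.ext <| funext fun F => by rw [dual_toFun, dual_oval_compl, sub_sub_cancel]

lemma oval_inter {ν : Capacity X} (h : IsNecessity ν) (U V : Set X) :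
    ν.oval (U ∩ V) = min (ν.oval U) (ν.oval V) := by
  refine le_antisymm (le_min (ν.oval_mono inter_subset_left) (ν.oval_mono inter_subset_right))
    (le_of_forall_lt_imp_le_of_dense fun c hc => ?_)
  obtain ⟨K, hKU, hK⟩ := exists_lt_oval (hc.trans_le (min_le_left _ _))
  obtain ⟨L, hLV, hL⟩ := exists_lt_oval (hc.trans_le (min_le_right _ _))
  calc c ≤ ν.toFun (K ⊓ L) := by rw [h K L]; exact (lt_min hK hL).le
    _ ≤ ν.oval (U ∩ V) := ν.le_oval (inter_subset_inter hKU hLV)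

lemma exists_eq_sup_of_subset_union [NormalSpace X] (K : Closeds X) {U V : Set X}
    (hU : IsOpen U) (hV : IsOpen V) (hK : (K : Set X) ⊆ U ∪ V) :
    ∃ K₁ K₂ : Closeds X, (K₁ : Set X) ⊆ U ∧ (K₂ : Set X) ⊆ V ∧ K = K₁ ⊔ K₂ := by
  have hKV : (K : Set X) \ V ⊆ U := fun x hx => (hK hx.1).resolve_right hx.2
  obtain ⟨W, hW, hKW, hWU⟩ := normal_exists_closure_subset (K.isClosed.sdiff hV) hU hKV
  refine ⟨⟨K ∩ closure W, K.isClosed.inter isClosed_closure⟩, ⟨K \ W, K.isClosed.sdiff hW⟩,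
    inter_subset_right.trans hWU, fun x hx => ?_, SetLike.ext' ?_⟩
  · by_contra hxV
    exact hx.2 (hKW ⟨hx.1, hxV⟩)
  · ext x
    simp only [Closeds.coe_sup, Closeds.coe_mk, mem_union, mem_inter_iff, mem_sdiff]
    refine ⟨fun hxK => ?_, by rintro (⟨hxK, -⟩ | ⟨hxK, -⟩) <;> exact hxK⟩
    by_cases hxW : x ∈ W
    exacts [Or.inl ⟨hxK, subset_closure hxW⟩, Or.inr ⟨hxK, hxW⟩]

lemma oval_union [NormalSpace X] {μ : Capacity X} (h : IsPossibility μ) {U V : Set X}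
    (hU : IsOpen U) (hV : IsOpen V) : μ.oval (U ∪ V) = max (μ.oval U) (μ.oval V) := by
  refine le_antisymm (oval_le fun K hK => ?_)
    (max_le (μ.oval_mono subset_union_left) (μ.oval_mono subset_union_right))
  obtain ⟨K₁, K₂, hK₁, hK₂, rfl⟩ := exists_eq_sup_of_subset_union K hU hV hK
  rw [h K₁ K₂]
  exact max_le_max (μ.le_oval hK₁) (μ.le_oval hK₂)

lemma isPossibility_dual {ν : Capacity X} (h : IsNecessity ν) : IsPossibility (dual ν) := by
  intro A B
  simp only [dual_toFun, Closeds.coe_sup, compl_union, oval_inter h, max_sub_sub_left]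

lemma isNecessity_dual [NormalSpace X] {μ : Capacity X} (h : IsPossibility μ) :
    IsNecessity (dual μ) := by
  intro A B
  simp only [dual_toFun, Closeds.coe_inf, compl_inter, min_sub_sub_left,
    oval_union h A.isClosed.isOpen_compl B.isClosed.isOpen_compl]

lemma isNecessity_iff_isPossibility_dual [NormalSpace X] (ν : Capacity X) :
    IsNecessity ν ↔ IsPossibility (dual ν) :=
  ⟨isPossibility_dual, fun h => dual_dual ν ▸ isNecessity_dual h⟩

lemma isOpen_setOf_toFun_lt (F : Closeds X) {a : ℝ} (ha : a ∈ Icc (0 : ℝ) 1) :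
    IsOpen {c : Capacity X | c.toFun F < a} :=
  isOpen_generateFrom_of_mem (Or.inl ⟨F, a, ha, rfl⟩)

lemma isOpen_setOf_lt_oval {U : Set X} (hU : IsOpen U) {a : ℝ} (ha : a ∈ Icc (0 : ℝ) 1) :
    IsOpen {c : Capacity X | a < c.oval U} :=
  isOpen_generateFrom_of_mem (Or.inr ⟨U, hU, a, ha, rfl⟩)

lemma lt_dual_oval_iff [NormalSpace X] (c : Capacity X) {U : Set X} (hU : IsOpen U) (a : ℝ) :
    a < (dual c).oval U ↔ ∃ F : Closeds X, closure (F : Set X)ᶜ ⊆ U ∧ c.toFun F < 1 - a := by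
  constructor
  · intro hc
    obtain ⟨K, hKU, hK⟩ := exists_lt_oval hc
    obtain ⟨W, hW, hKW, hWU⟩ := normal_exists_closure_subset K.isClosed hU hKU
    refine ⟨⟨Wᶜ, hW.isClosed_compl⟩, by simpa using hWU, ?_⟩
    have := c.le_oval (K := ⟨Wᶜ, hW.isClosed_compl⟩) (compl_subset_compl.mpr hKW)
    rw [dual_toFun] at hK
    linarith
  · rintro ⟨F, hFU, hF⟩
    have := c.oval_le_toFun (U := (closure (F : Set X)ᶜ)ᶜ) (compl_subset_comm.mp subset_closure)
    calc a < (dual c).toFun ⟨closure (F : Set X)ᶜ, isClosed_closure⟩ := by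
          simp only [dual_toFun, Closeds.coe_mk]; linarith
      _ ≤ (dual c).oval U := (dual c).le_oval hFU

lemma continuous_dual [NormalSpace X] : Continuous (dual : Capacity X → Capacity X) := by
  refine continuous_generateFrom_iff.mpr ?_
  rintro s (⟨F, a, ha, rfl⟩ | ⟨U, hU, a, ha, rfl⟩)
  · have hpre : dual ⁻¹' {c : Capacity X | c.toFun F < a} =
        {c | 1 - a < c.oval (F : Set X)ᶜ} := by
      ext c
      exact sub_lt_comm (a := (1 : ℝ))
    rw [hpre]
    exact isOpen_setOf_lt_oval F.isClosed.isOpen_compl (Icc.mem_iff_one_sub_mem.mp ha)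
  · have hpre : dual ⁻¹' {c : Capacity X | a < c.oval U} =
        ⋃ (F : Closeds X) (_ : closure (F : Set X)ᶜ ⊆ U), {c | c.toFun F < 1 - a} := by
      ext c
      simp only [mem_preimage, mem_ofPred_eq, mem_iUnion, exists_prop, lt_dual_oval_iff c hU]
    rw [hpre]
    exact isOpen_iUnion fun F => isOpen_iUnion fun _ =>
      isOpen_setOf_toFun_lt F (Icc.mem_iff_one_sub_mem.mp ha)

noncomputable def dualHomeomorph [NormalSpace X] : Capacity X ≃ₜ Capacity X where
  toFun := dual
  invFun := dual
  left_inv := dual_dual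
  right_inv := dual_dual
  continuous_toFun := continuous_dual
  continuous_invFun := continuous_dual

end Capacity

/-- the dual (conjugate) capacity `κX(ν)(F) = 1 − ν(X ∖ F)` (the value on
the open complement being the sup-extension) is again a capacity; `κX : MX → MX` is a
homeomorphism and an involution; and `ν` is a necessity capacity iff `κX(ν)` is a
possibility capacity. -/
theorem dual_capacity (X : Type u) [TopologicalSpace X] [CompactSpace X] [T2Space X] :
    ∃ κ : Capacity X → Capacity X,
      (∀ (ν : Capacity X) (F : Set X), IsClosed F → (κ ν).cval F = 1 - ν.oval Fᶜ) ∧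
      IsHomeomorph κ ∧
      (∀ ν : Capacity X, κ (κ ν) = ν) ∧
      (∀ ν : Capacity X, IsNecessity ν ↔ IsPossibility (κ ν)) :=
  ⟨Capacity.dual, fun ν _ hF => (Capacity.dual ν).cval_of_isClosed hF,
    Capacity.dualHomeomorph.isHomeomorph, Capacity.dual_dual,
    Capacity.isNecessity_iff_isPossibility_dual⟩
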